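/- Let p be a prime and let A, B ∈ F_p[[X]] (or over any commutative ring of characteristic p). Define, for a series C = Σ γₙXⁿ, the section C_{0,1} = Σ_{n≥0} γ_{pn} Xⁿ. Then (A ⧢ B)_{0,1} = A_{0,1} ⧢ B_{0,1}, where ⧢ is the shuffle product. -/

import Mathlib

open PowerSeries

/-- The shuffle product of formal power series. -/
noncomputable def shuffle {K : Type*} [CommRing K] (A B : PowerSeries K) : PowerSeries K :=
  PowerSeries.mk fun n => ∑ k ∈ Finset.range (n + 1),
    (n.choose k : K) * (coeff k A) * (coeff (n - k) B)

/-- The section `C_{0,1} = Σ_{n≥0} γ_{pn} Xⁿ` of `C = Σ γₙXⁿ`. -/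
noncomputable def sect {K : Type*} [CommRing K] (p : ℕ) (C : PowerSeries K) : PowerSeries K :=
  PowerSeries.mk fun n => coeff (p * n) C

/-! In characteristic `p`, Lucas' congruences kill every term `C(pn, k) A_k B_{pn-k}` of the
shuffle coefficient with `p ∤ k` and turn the term with `k = pj` into `C(n, j) A_{pj} B_{p(n-j)}`,
which is the `n`-th coefficient of `A_{0,1} ⧢ B_{0,1}`. -/

section Lucas

variable {R : Type*} [AddMonoidWithOne R] {p : ℕ} [Fact p.Prime] [CharP R p]

theorem Nat.cast_choose_prime_mul_of_not_dvd (n : ℕ) {k : ℕ} (hk : ¬p ∣ k) :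
    ((p * n).choose k : R) = 0 := by
  have hkp : 0 < k % p := Nat.pos_of_ne_zero fun h => hk (Nat.dvd_of_mod_eq_zero h)
  have := CharP.natCast_eq_natCast' R p (Choose.choose_modEq_choose_mod_mul_choose_div_nat
    (n := p * n) (k := k))
  rwa [Nat.mul_mod_right, Nat.choose_eq_zero_of_lt hkp, zero_mul, Nat.cast_zero] at this

theorem Nat.cast_choose_prime_mul_mul (n k : ℕ) :
    ((p * n).choose (p * k) : R) = n.choose k :=
  CharP.natCast_eq_natCast' R p Choose.choose_mul_mul_modEq_choose_nat

end Lucas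

theorem Finset.sum_range_mul_succ_eq_of_not_dvd {M : Type*} [AddCommMonoid M] {p : ℕ}
    (hp : 0 < p) (n : ℕ) (f : ℕ → M) (hf : ∀ k, ¬p ∣ k → f k = 0) :
    ∑ k ∈ range (p * n + 1), f k = ∑ j ∈ range (n + 1), f (p * j) := by
  have hsub : (range (n + 1)).image (p * ·) ⊆ range (p * n + 1) := by
    simp only [subset_iff, mem_image, mem_range]
    rintro _ ⟨j, hj, rfl⟩
    have := Nat.mul_le_mul_left p (Nat.lt_succ_iff.mp hj)
    omega
  rw [← sum_subset hsub, sum_image fun a _ b _ h => Nat.eq_of_mul_eq_mul_left hp h]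
  rintro k hk hk'
  refine hf k ?_
  rintro ⟨j, rfl⟩
  simp only [mem_range] at hk
  exact hk' (mem_image_of_mem _ (mem_range.mpr (by nlinarith)))

theorem sect_shuffle {K : Type*} [CommRing K] (p : ℕ) [hp : Fact p.Prime] [CharP K p]
    (A B : PowerSeries K) :
    sect p (shuffle A B) = shuffle (sect p A) (sect p B) := by
  ext n
  simp only [sect, shuffle, coeff_mk]
  rw [Finset.sum_range_mul_succ_eq_of_not_dvd hp.out.pos n _ fun k hk => by
    rw [Nat.cast_choose_prime_mul_of_not_dvd n hk, zero_mul, zero_mul]]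
  refine Finset.sum_congr rfl fun j _ => ?_
  rw [Nat.cast_choose_prime_mul_mul, ← Nat.mul_sub]
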